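/- For integers m ≥ 3, d_1 ≤ d_2 ≤ ... ≤ d_m and positive integers ε_1, ..., ε_{m-2} satisfying d_{j+2} + ε_j ≤ d_{j+3} + ε_{j+1} for j = 1, ..., m−3, set t = ε_1 + ... + ε_{m-2}, d = d_1 + d_2 + 1 − t, τ = d_1² + d_1d_2 + d_2² − t(d_1 + d_2) − Σ_{j=1}^{m-2} ε_j d_{j+2} + Σ_{1≤i<j≤m-2} ε_i ε_j, and τ'_max = (d−1)² − d_1(d − d_1 − 1) − (2d_1 + 2 − d)(2d_1 + 1 − d)/2. Assume 2d_1 ≥ d. Then τ = τ'_max − 1 if and only if exactly one of the following holds: (1) d_1 = d_2 = ... = d_{m-1}, d_m = d_1 + 1 and ε_1 = ... = ε_{m-2} = 1 (in which case m = 2d_1 + 3 − d), or (2) d_1 = d_2 = ... = d_m, ε_1 = ... = ε_{m-3} = 1 and ε_{m-2} = 2 (in which case m = 2d_1 + 2 − d). -/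

import Mathlib

/-!
Put `G = Σ ε_j (d_{j+2} - d_2) ≥ 0` (`degreeDefect`), `H = Σ ε_j (ε_j - 1) ≥ 0` (`epsDefect`)
and `u = 2 d_1 + 1 - d`, so that `1 ≤ u ≤ t`. Expanding `t² = (Σ ε_j)²`, the equation
`τ = τ'_max - 1` becomes `2G + H + t + t² = u² + u + 2`. Since `t ↦ t + t²` is increasing, `u < t`
would make the left side at least `u² + 3u + 2`; hence `u = t`, i.e. `d_1 = d_2`, and `2G + H = 2`,
so `(G, H)` is `(1, 0)` or `(0, 2)`. In the first case all `ε_j = 1` and the nondecreasing excesses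
`d_{j+2} - d_2` sum to `1`, so only the last one is nonzero. In the second case all `d_j` are equal,
so the hypothesis on the `ε_j` makes them nondecreasing, and `Σ ε_j (ε_j - 1) = 2` forces
`ε = (1, …, 1, 2)`.
-/

open Finset

theorem sq_sum_Icc {R : Type*} [CommSemiring R] (f : ℕ → R) (n : ℕ) :
    (∑ j ∈ Icc 1 n, f j) ^ 2 =
      ∑ j ∈ Icc 1 n, f j ^ 2 + 2 * ∑ i ∈ Icc 1 n, ∑ j ∈ Icc (i + 1) n, f i * f j := by
  induction n with
  | zero => simp
  | succ n ih =>
    have hinner : ∀ i ∈ Icc 1 n, ∑ j ∈ Icc (i + 1) (n + 1), f i * f j =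
        ∑ j ∈ Icc (i + 1) n, f i * f j + f i * f (n + 1) := fun i hi =>
      sum_Icc_succ_top (by grind) _
    rw [sum_Icc_succ_top (by omega), sum_Icc_succ_top (by omega), sum_Icc_succ_top (by omega),
      sum_congr rfl hinner, sum_add_distrib, Icc_eq_empty (a := n + 1 + 1) (by omega), sum_empty,
      ← sum_mul, add_sq, ih]
    ring

theorem Finset.sum_mul_eq_zero_iff_of_pos {ι R : Type*} [Semiring R] [PartialOrder R]
    [IsStrictOrderedRing R] {s : Finset ι} {w f : ι → R} (hw : ∀ i ∈ s, 0 < w i)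
    (hf : ∀ i ∈ s, 0 ≤ f i) : ∑ i ∈ s, w i * f i = 0 ↔ ∀ i ∈ s, f i = 0 := by
  rw [sum_eq_zero_iff_of_nonneg fun i hi => mul_nonneg (hw i hi).le (hf i hi)]
  refine forall₂_congr fun i hi => ⟨fun h => ?_, fun h => by rw [h, mul_zero]⟩
  by_contra hne
  exact (mul_pos (hw i hi) ((hf i hi).lt_of_ne' hne)).ne' h

theorem sum_Icc_succ_eq_iff_of_le_top {M : Type*} [AddCommGroup M] [LinearOrder M]
    [IsOrderedAddMonoid M] {f : ℕ → M} {k : ℕ} {c : M} (hc : 0 < c)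
    (hf : ∀ j ∈ Icc 1 k, 0 ≤ f j ∧ f j ≤ f (k + 1)) (hgap : f (k + 1) ≠ 0 → c ≤ f (k + 1)) :
    ∑ j ∈ Icc 1 (k + 1), f j = c ↔ (∀ j ∈ Icc 1 k, f j = 0) ∧ f (k + 1) = c := by
  rw [sum_Icc_succ_top (by omega)]
  refine ⟨fun h => ?_, fun ⟨hzero, htop⟩ => by rw [sum_eq_zero hzero, htop, zero_add]⟩
  have hnonneg : ∀ j ∈ Icc 1 k, 0 ≤ f j := fun j hj => (hf j hj).1
  have htop : f (k + 1) ≠ 0 := by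
    intro h0
    rw [sum_eq_zero fun j hj => le_antisymm (h0 ▸ (hf j hj).2) (hnonneg j hj), h0,
      zero_add] at h
    exact hc.ne' h.symm
  have hrest : ∑ j ∈ Icc 1 k, f j = 0 := by
    refine le_antisymm ?_ (sum_nonneg hnonneg)
    simpa [← h] using hgap htop
  rw [sum_eq_zero_iff_of_nonneg hnonneg] at hrest
  exact ⟨hrest, by simpa [sum_eq_zero hrest] using h⟩

def degreeDefect (d ε : ℕ → ℤ) (n : ℕ) : ℤ := ∑ j ∈ Icc 1 n, ε j * (d (j + 2) - d 2)

def epsDefect (ε : ℕ → ℤ) (n : ℕ) : ℤ := ∑ j ∈ Icc 1 n, ε j * (ε j - 1)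

section
variable {d ε : ℕ → ℤ} {n k : ℕ}

theorem sum_mul_eq_degreeDefect_add (d ε : ℕ → ℤ) (n : ℕ) :
    ∑ j ∈ Icc 1 n, ε j * d (j + 2) = degreeDefect d ε n + (∑ j ∈ Icc 1 n, ε j) * d 2 := by
  rw [degreeDefect, sum_mul, ← sum_add_distrib]
  exact sum_congr rfl fun j _ => by ring

theorem two_mul_sum_pairs_eq (ε : ℕ → ℤ) (n : ℕ) :
    2 * ∑ i ∈ Icc 1 n, ∑ j ∈ Icc (i + 1) n, ε i * ε j =
      (∑ j ∈ Icc 1 n, ε j) ^ 2 - ∑ j ∈ Icc 1 n, ε j - epsDefect ε n := by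
  have h : epsDefect ε n = ∑ j ∈ Icc 1 n, ε j ^ 2 - ∑ j ∈ Icc 1 n, ε j := by
    rw [epsDefect, ← sum_sub_distrib]
    exact sum_congr rfl fun j _ => by ring
  rw [h, sq_sum_Icc]
  ring

theorem degreeDefect_nonneg (hd : MonotoneOn d (Set.Icc 1 (n + 2)))
    (hε : ∀ j ∈ Icc 1 n, 0 < ε j) : 0 ≤ degreeDefect d ε n :=
  sum_nonneg fun j hj => by
    obtain ⟨h1, h2⟩ := mem_Icc.1 hj
    exact mul_nonneg (hε j hj).le
      (sub_nonneg.2 (hd ⟨by omega, by omega⟩ ⟨by omega, by omega⟩ (by omega)))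

theorem epsDefect_nonneg (hε : ∀ j ∈ Icc 1 n, 0 < ε j) : 0 ≤ epsDefect ε n :=
  sum_nonneg fun j hj => mul_nonneg (hε j hj).le (sub_nonneg.2 (hε j hj))

theorem epsDefect_eq_zero_and_degreeDefect_eq_one_iff (hd : MonotoneOn d (Set.Icc 1 (k + 3)))
    (hε : ∀ j ∈ Icc 1 (k + 1), 0 < ε j) :
    epsDefect ε (k + 1) = 0 ∧ degreeDefect d ε (k + 1) = 1 ↔
      (∀ j ∈ Icc 1 (k + 1), ε j = 1) ∧ (∀ j ∈ Icc 1 k, d (j + 2) = d 2) ∧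
        d (k + 3) = d 2 + 1 := by
  rw [epsDefect, sum_mul_eq_zero_iff_of_pos (f := fun j => ε j - 1) hε
    fun j hj => by linarith [hε j hj]]
  simp only [sub_eq_zero]
  refine and_congr_right fun hone => ?_
  have h2top : d 2 ≤ d (k + 1 + 2) := hd ⟨by omega, by omega⟩ ⟨by omega, by omega⟩ (by omega)
  rw [degreeDefect, sum_congr rfl fun j hj => by rw [hone j hj, one_mul],
    sum_Icc_succ_eq_iff_of_le_top one_pos ?_ fun h => by omega]
  · simp only [sub_eq_iff_eq_add', add_zero, add_assoc, Nat.reduceAdd]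
  · intro j hj
    obtain ⟨h1, h2⟩ := mem_Icc.1 hj
    exact ⟨sub_nonneg.2 (hd ⟨by omega, by omega⟩ ⟨by omega, by omega⟩ (by omega)),
      sub_le_sub_right (hd ⟨by omega, by omega⟩ ⟨by omega, by omega⟩ (by omega)) _⟩

theorem degreeDefect_eq_zero_and_epsDefect_eq_two_iff (hd : MonotoneOn d (Set.Icc 1 (k + 3)))
    (hε : ∀ j ∈ Icc 1 (k + 1), 0 < ε j)
    (hc : ∀ j, 1 ≤ j → j ≤ k → d (j + 2) + ε j ≤ d (j + 3) + ε (j + 1)) :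
    degreeDefect d ε (k + 1) = 0 ∧ epsDefect ε (k + 1) = 2 ↔
      (∀ j ∈ Icc 1 (k + 1), d (j + 2) = d 2) ∧ (∀ j ∈ Icc 1 k, ε j = 1) ∧ ε (k + 1) = 2 := by
  have hsub : ∀ j ∈ Icc 1 k, j ∈ Icc 1 (k + 1) := fun j hj => Icc_subset_Icc_right (by omega) hj
  rw [degreeDefect, sum_mul_eq_zero_iff_of_pos (f := fun j => d (j + 2) - d 2) hε fun j hj => by
    obtain ⟨h1, h2⟩ := mem_Icc.1 hj
    exact sub_nonneg.2 (hd ⟨by omega, by omega⟩ ⟨by omega, by omega⟩ (by omega))]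
  simp only [sub_eq_zero]
  refine and_congr_right fun hflat => ?_
  -- with all `d_{j+2}` equal, `hc` says that `ε` is nondecreasing
  have hmono : MonotoneOn ε (Set.Icc 1 (k + 1)) :=
    monotoneOn_of_le_succ Set.ordConnected_Icc fun j _ hj hj' => by
      rw [Order.succ_eq_add_one] at hj' ⊢
      have := hc j hj.1 (by grind)
      have h1 := hflat j (mem_Icc.2 hj)
      have h2 := hflat (j + 1) (mem_Icc.2 hj')
      linarith
  rw [epsDefect, sum_Icc_succ_eq_iff_of_le_top two_pos ?_ ?_]
  · refine and_congr (forall₂_congr fun j hj => ?_) ?_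
    · rw [mul_eq_zero_iff_left (hε j (hsub j hj)).ne', sub_eq_zero]
    · have := hε (k + 1) (by simp)
      constructor
      · intro h; nlinarith
      · intro h; rw [h]; norm_num
  · intro j hj
    have h1 := hε j (hsub j hj)
    have h2 : ε j ≤ ε (k + 1) := hmono (by grind) (by grind) (by grind)
    constructor <;> nlinarith
  · intro h
    have := hε (k + 1) (by simp)
    have : 2 ≤ ε (k + 1) := by
      by_contra! h'
      exact h (by rw [show ε (k + 1) = 1 by omega]; norm_num)
    nlinarith

theorem forall_Icc_add_two_eq_iff :
    (∀ i ∈ Icc 1 (n + 2), d i = d 1) ↔ d 1 = d 2 ∧ ∀ j ∈ Icc 1 n, d (j + 2) = d 2 := by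
  constructor
  · intro h
    have h2 := h 2 (by simp)
    exact ⟨h2.symm, fun j hj => by rw [h (j + 2) (by grind), h2]⟩
  · rintro ⟨h12, h⟩ i hi
    match i, hi with
    | 0, hi => simp at hi
    | 1, _ => rfl
    | 2, _ => exact h12.symm
    | j + 3, hi => exact (h (j + 1) (by grind)).trans h12.symm

variable {t D : ℤ}

theorem eq_and_epsDefect_eq_zero_and_degreeDefect_eq_one_iff
    (hd : MonotoneOn d (Set.Icc 1 (k + 3))) (hε : ∀ j ∈ Icc 1 (k + 1), 0 < ε j)
    (ht : t = ∑ j ∈ Icc 1 (k + 1), ε j) (hD : D = d 1 + d 2 + 1 - t) :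
    d 1 = d 2 ∧ epsDefect ε (k + 1) = 0 ∧ degreeDefect d ε (k + 1) = 1 ↔
      (∀ i ∈ Icc 1 (k + 2), d i = d 1) ∧ d (k + 3) = d 1 + 1 ∧
        (∀ j ∈ Icc 1 (k + 1), ε j = 1) ∧ (↑(k + 3) : ℤ) = 2 * d 1 + 3 - D := by
  rw [epsDefect_eq_zero_and_degreeDefect_eq_one_iff hd hε, forall_Icc_add_two_eq_iff]
  constructor
  · rintro ⟨h12, hone, hflat, htop⟩
    have : t = k + 1 := by rw [ht, sum_congr rfl hone]; simp
    exact ⟨⟨h12, hflat⟩, by rw [htop, h12], hone, by push_cast; omega⟩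
  · rintro ⟨⟨h12, hflat⟩, htop, hone, -⟩
    exact ⟨h12, hone, hflat, by rw [htop, h12]⟩

theorem eq_and_degreeDefect_eq_zero_and_epsDefect_eq_two_iff
    (hd : MonotoneOn d (Set.Icc 1 (k + 3))) (hε : ∀ j ∈ Icc 1 (k + 1), 0 < ε j)
    (hc : ∀ j, 1 ≤ j → j ≤ k → d (j + 2) + ε j ≤ d (j + 3) + ε (j + 1))
    (ht : t = ∑ j ∈ Icc 1 (k + 1), ε j) (hD : D = d 1 + d 2 + 1 - t) :
    d 1 = d 2 ∧ degreeDefect d ε (k + 1) = 0 ∧ epsDefect ε (k + 1) = 2 ↔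
      (∀ i ∈ Icc 1 (k + 3), d i = d 1) ∧ (∀ j ∈ Icc 1 k, ε j = 1) ∧ ε (k + 1) = 2 ∧
        (↑(k + 3) : ℤ) = 2 * d 1 + 2 - D := by
  rw [degreeDefect_eq_zero_and_epsDefect_eq_two_iff hd hε hc, forall_Icc_add_two_eq_iff]
  constructor
  · rintro ⟨h12, hflat, hone, htop⟩
    have : t = k + 2 := by
      rw [ht, sum_Icc_succ_top (by omega), sum_congr rfl hone, htop]; simp
    exact ⟨⟨h12, hflat⟩, hone, htop, by push_cast; omega⟩
  · rintro ⟨⟨h12, hflat⟩, hone, htop, -⟩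
    exact ⟨h12, hflat, hone, htop⟩

end

theorem tjurina_eq_max_sub_one_iff {a b t G H D τ : ℤ} {τmax' : ℚ} (hD : D = a + b + 1 - t)
    (hτ : 2 * τ = 2 * (a ^ 2 + a * b + b ^ 2 - t * (a + b) - (G + t * b)) + t ^ 2 - t - H)
    (hτmax' : τmax' = ((D : ℚ) - 1) ^ 2 - (a : ℚ) * ((D : ℚ) - a - 1)
        - (2 * (a : ℚ) + 2 - D) * (2 * (a : ℚ) + 1 - D) / 2) :
    (τ : ℚ) = τmax' - 1 ↔ 2 * G + H + t + t ^ 2 = (a - b + t) ^ 2 + (a - b + t) + 2 := by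
  have key : (2 : ℚ) * (τmax' - 1 - τ) =
      ((2 * G + H + t + t ^ 2 - ((a - b + t) ^ 2 + (a - b + t) + 2) : ℤ) : ℚ) := by
    have hτq := congrArg (Int.cast : ℤ → ℚ) hτ
    push_cast at hτq
    rw [hτmax', hD]
    push_cast
    linear_combination -hτq
  rw [eq_comm, ← sub_eq_zero, ← mul_eq_zero_iff_left two_ne_zero, key, Int.cast_eq_zero,
    sub_eq_zero]

theorem add_add_sq_eq_sq_add_self_add_two_iff {u t G H : ℤ} (hu : 1 ≤ u) (hut : u ≤ t)
    (hG : 0 ≤ G) (hH : 0 ≤ H) :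
    2 * G + H + t + t ^ 2 = u ^ 2 + u + 2 ↔ u = t ∧ 2 * G + H = 2 := by
  refine ⟨fun h => ?_, fun ⟨heq, h⟩ => by rw [heq]; linarith⟩
  obtain rfl : u = t := by
    by_contra hne
    have : u + 1 ≤ t := by omega
    nlinarith
  exact ⟨rfl, by linarith⟩

/-- Corollary 5.6 (nearly maximal Tjurina curves): `τ = τ'_max − 1` iff
exactly one of the two listed situations occurs. -/
theorem nearly_maximal_Tjurina_characterization (m : ℕ) (hm : 3 ≤ m)
    (d ε : ℕ → ℤ)
    (hsort : ∀ i ∈ Icc 1 m, ∀ j ∈ Icc 1 m, i ≤ j → d i ≤ d j)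
    (hε : ∀ j ∈ Icc 1 (m - 2), 0 < ε j)
    (hc : ∀ j, 1 ≤ j → j ≤ m - 3 → d (j + 2) + ε j ≤ d (j + 3) + ε (j + 1))
    (t : ℤ) (ht : t = ∑ j ∈ Icc 1 (m - 2), ε j)
    (D : ℤ) (hD : D = d 1 + d 2 + 1 - t)
    (τ : ℤ)
    (hτ : τ = (d 1) ^ 2 + d 1 * d 2 + (d 2) ^ 2 - t * (d 1 + d 2)
        - ∑ j ∈ Icc 1 (m - 2), ε j * d (j + 2)
        + ∑ i ∈ Icc 1 (m - 2), ∑ j ∈ Icc (i + 1) (m - 2), ε i * ε j)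
    (τmax' : ℚ)
    (hτmax' : τmax' = ((D : ℚ) - 1) ^ 2 - (d 1 : ℚ) * ((D : ℚ) - d 1 - 1)
        - (2 * (d 1 : ℚ) + 2 - D) * (2 * (d 1 : ℚ) + 1 - D) / 2)
    (h2d1 : D ≤ 2 * d 1) :
    (τ : ℚ) = τmax' - 1 ↔
      Xor'
        ((∀ i ∈ Icc 1 (m - 1), d i = d 1) ∧ d m = d 1 + 1 ∧
          (∀ j ∈ Icc 1 (m - 2), ε j = 1) ∧ (m : ℤ) = 2 * d 1 + 3 - D)
        ((∀ i ∈ Icc 1 m, d i = d 1) ∧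
          (∀ j ∈ Icc 1 (m - 3), ε j = 1) ∧ ε (m - 2) = 2 ∧
          (m : ℤ) = 2 * d 1 + 2 - D) := by
  obtain ⟨k, rfl⟩ : ∃ k, m = k + 3 := ⟨m - 3, by omega⟩
  simp only [show k + 3 - 1 = k + 2 by omega, show k + 3 - 2 = k + 1 by omega,
    show k + 3 - 3 = k by omega] at hε hc ht hτ ⊢
  have hd : MonotoneOn d (Set.Icc 1 (k + 3)) := fun i hi j hj =>
    hsort i (by simpa using hi) j (by simpa using hj)
  have hG := degreeDefect_nonneg hd hε
  have hH := epsDefect_nonneg hε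
  have h2τ : 2 * τ = 2 * (d 1 ^ 2 + d 1 * d 2 + d 2 ^ 2 - t * (d 1 + d 2)
      - (degreeDefect d ε (k + 1) + t * d 2)) + t ^ 2 - t - epsDefect ε (k + 1) := by
    subst ht
    linear_combination 2 * hτ - 2 * sum_mul_eq_degreeDefect_add d ε (k + 1)
      + two_mul_sum_pairs_eq ε (k + 1)
  have h12 : d 1 ≤ d 2 := hd (by simp) (by simp) (by simp)
  have hsplit : d 1 - d 2 + t = t ∧ 2 * degreeDefect d ε (k + 1) + epsDefect ε (k + 1) = 2 ↔
      (d 1 = d 2 ∧ epsDefect ε (k + 1) = 0 ∧ degreeDefect d ε (k + 1) = 1) ∨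
        (d 1 = d 2 ∧ degreeDefect d ε (k + 1) = 0 ∧ epsDefect ε (k + 1) = 2) := by
    omega
  rw [tjurina_eq_max_sub_one_iff hD h2τ hτmax',
    add_add_sq_eq_sq_add_self_add_two_iff (by omega) (by omega) hG hH, hsplit,
    eq_and_epsDefect_eq_zero_and_degreeDefect_eq_one_iff hd hε ht hD,
    eq_and_degreeDefect_eq_zero_and_epsDefect_eq_two_iff hd hε hc ht hD]
  refine (and_iff_left_of_imp fun _ ⟨⟨_, htop, _⟩, hall, _⟩ => ?_).symm.trans
    (xor_iff_or_and_not_and _ _).symm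
  have := hall (k + 3) (by simp)
  omega
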